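/- arXiv:2605.19195 — 3 statements merged into one kernel-verified Lean document; each statement's English description precedes it below -/
import Mathlib

section
/- For n ≥ 1 and σ_x, σ_ξ > 0, the integral ∫_{-∞}^{∞} (σ_x² σ_ξ² / (σ_x² z² + σ_ξ²))^{(n+1)/2} · ln(z² + σ_ξ²/σ_x²) dz equals (σ_x^n σ_ξ √π Γ(n/2) / Γ((n+1)/2)) · [ψ((n+1)/2) - ψ(n/2) + ln(σ_ξ²/σ_x²)]. -/
/-!
Put `a = σξ² / σx²` and `s = (n + 1) / 2`. The kernel is `σξ^{2s} (z² + a)^{-s}`, and the substitution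
`z = √a u` reduces everything to `I(s) = ∫ (1 + u²)^{-s} du` and its logarithmic moment
`J(s) = ∫ (1 + u²)^{-s} log (1 + u²) du`. Writing `Γ(s) (1 + u²)^{-s}` as the Gamma integral
`∫₀^∞ t^{s-1} e^{-(1+u²)t} dt` and doing the Gaussian integral in `u` first gives
`I(s) = √π Γ(s - 1/2) / Γ(s)` for `s > 1/2`. Differentiating under the integral sign, `J = -I'`,
and the logarithmic derivative of `Γ(s - 1/2) / Γ(s)` is `ψ(s - 1/2) - ψ(s)`.
-/

open MeasureTheory Real

/-- The digamma function `ψ = Γ'/Γ`. -/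
noncomputable def digamma (x : ℝ) : ℝ := deriv Real.Gamma x / Real.Gamma x

open Set Filter

lemma exp_neg_one_add_sq_mul (t u : ℝ) : exp (-((1 + u ^ 2) * t)) = exp (-t) * exp (-t * u ^ 2) := by
  rw [← exp_add]; ring_nf

lemma integral_rpow_mul_exp_neg_one_add_sq_mul (s : ℝ) {t : ℝ} (ht : 0 < t) :
    ∫ u : ℝ, t ^ (s - 1) * exp (-((1 + u ^ 2) * t)) = √π * (exp (-t) * t ^ (s - 1 / 2 - 1)) := by
  have hpow : t ^ (s - 1 / 2 - 1) = t ^ (s - 1) / √t := by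
    rw [sqrt_eq_rpow, ← rpow_sub ht]; ring_nf
  simp_rw [exp_neg_one_add_sq_mul t, ← mul_assoc]
  rw [integral_const_mul, integral_gaussian, sqrt_div' _ ht.le, hpow]
  ring

section OneAddSqRpow

variable {s : ℝ}

lemma integrable_rpow_mul_exp_neg_one_add_sq_mul (hs : 1 / 2 < s) :
    Integrable (fun p : ℝ × ℝ ↦ p.1 ^ (s - 1) * exp (-((1 + p.2 ^ 2) * p.1)))
      ((volume.restrict (Ioi 0)).prod volume) := by
  rw [integrable_prod_iff (by fun_prop)]
  constructor
  · filter_upwards [self_mem_ae_restrict measurableSet_Ioi] with t (ht : 0 < t)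
    refine ((integrable_exp_neg_mul_sq ht).const_mul (t ^ (s - 1) * exp (-t))).congr ?_
    filter_upwards with u
    rw [exp_neg_one_add_sq_mul, mul_assoc]
  · refine ((GammaIntegral_convergent (by linarith : 0 < s - 1 / 2)).const_mul √π).congr ?_
    filter_upwards [self_mem_ae_restrict measurableSet_Ioi] with t (ht : 0 < t)
    have hnonneg (u : ℝ) : 0 ≤ t ^ (s - 1) * exp (-((1 + u ^ 2) * t)) := by positivity
    simp only [norm_of_nonneg (hnonneg _)]
    exact (integral_rpow_mul_exp_neg_one_add_sq_mul s ht).symm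

lemma integrable_one_add_sq_rpow_neg (hs : 1 / 2 < s) :
    Integrable fun u : ℝ ↦ (1 + u ^ 2) ^ (-s) := by
  simpa [neg_div] using
    integrable_rpow_neg_one_add_norm_sq (E := ℝ) (μ := volume) (r := 2 * s)
    (by rw [Module.finrank_self, Nat.cast_one]; linarith)

theorem integral_one_add_sq_rpow_neg (hs : 1 / 2 < s) :
    ∫ u : ℝ, (1 + u ^ 2) ^ (-s) = √π * Gamma (s - 1 / 2) / Gamma s := by
  have hGamma (u : ℝ) :
      ∫ t in Ioi 0, t ^ (s - 1) * exp (-((1 + u ^ 2) * t)) = Gamma s * (1 + u ^ 2) ^ (-s) := by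
    rw [integral_rpow_mul_exp_neg_mul_Ioi (by linarith) (by positivity), one_div,
      inv_rpow (by positivity), rpow_neg (by positivity), mul_comm]
  have hfubini := integral_integral_swap
    (f := fun t u : ℝ ↦ t ^ (s - 1) * exp (-((1 + u ^ 2) * t)))
    (integrable_rpow_mul_exp_neg_one_add_sq_mul hs)
  rw [setIntegral_congr_fun measurableSet_Ioi
      fun t ht ↦ integral_rpow_mul_exp_neg_one_add_sq_mul s ht,
    integral_const_mul, ← Gamma_eq_integral (by linarith)] at hfubini
  simp_rw [hGamma, integral_const_mul] at hfubini
  rw [eq_div_iff (Gamma_pos_of_pos (by linarith)).ne', hfubini, mul_comm]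

lemma integrable_one_add_sq_rpow_neg_mul_log (hs : 1 / 2 < s) :
    Integrable fun u : ℝ ↦ (1 + u ^ 2) ^ (-s) * log (1 + u ^ 2) := by
  set δ := (s - 1 / 2) / 2
  have hδ : 0 < δ := by simp only [δ]; linarith
  refine ((integrable_one_add_sq_rpow_neg (s := s - δ) (by simp only [δ]; linarith)).const_mul
    δ⁻¹).mono' (by fun_prop (disch := intro; positivity)) (Eventually.of_forall fun u ↦ ?_)
  have hpos : 0 < 1 + u ^ 2 := by positivity
  rw [norm_of_nonneg (mul_nonneg (by positivity) (log_nonneg (by nlinarith)))]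
  calc (1 + u ^ 2) ^ (-s) * log (1 + u ^ 2)
      ≤ (1 + u ^ 2) ^ (-s) * ((1 + u ^ 2) ^ δ / δ) := by
        gcongr; exact log_le_rpow_div hpos.le hδ
    _ = δ⁻¹ * (1 + u ^ 2) ^ (-(s - δ)) := by
        rw [neg_sub, sub_eq_neg_add, rpow_add hpos]; ring

lemma hasDerivAt_integral_one_add_sq_rpow_neg (hs : 1 / 2 < s) :
    HasDerivAt (fun s ↦ ∫ u : ℝ, (1 + u ^ 2) ^ (-s))
      (-∫ u : ℝ, (1 + u ^ 2) ^ (-s) * log (1 + u ^ 2)) s := by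
  set ε := (s - 1 / 2) / 2
  have hε : 0 < ε := by simp only [ε]; linarith
  have hderiv (u t : ℝ) : HasDerivAt (fun s ↦ (1 + u ^ 2) ^ (-s))
      (-((1 + u ^ 2) ^ (-t) * log (1 + u ^ 2))) t := by
    convert (hasDerivAt_neg t).const_rpow (a := 1 + u ^ 2) (by positivity) using 1
    ring
  have hbound (u t : ℝ) (ht : t ∈ Metric.ball s ε) :
      ‖-((1 + u ^ 2) ^ (-t) * log (1 + u ^ 2))‖ ≤ (1 + u ^ 2) ^ (-(s - ε)) * log (1 + u ^ 2) := by
    have h1 : 1 ≤ 1 + u ^ 2 := by nlinarith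
    have hlog : 0 ≤ log (1 + u ^ 2) := log_nonneg h1
    rw [norm_neg, norm_of_nonneg (mul_nonneg (by positivity) hlog)]
    rw [Metric.mem_ball, dist_eq, abs_lt] at ht
    exact mul_le_mul_of_nonneg_right (rpow_le_rpow_of_exponent_le h1 (by linarith)) hlog
  have hdom := (hasDerivAt_integral_of_dominated_loc_of_deriv_le (Metric.ball_mem_nhds s hε)
    (Eventually.of_forall fun t ↦
      (by fun_prop : Measurable fun u : ℝ ↦ (1 + u ^ 2) ^ (-t)).aestronglyMeasurable)
    (integrable_one_add_sq_rpow_neg hs)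
    (integrable_one_add_sq_rpow_neg_mul_log hs).neg.aestronglyMeasurable
    (Eventually.of_forall hbound)
    (integrable_one_add_sq_rpow_neg_mul_log (by simp only [ε]; linarith))
    (Eventually.of_forall fun u t _ ↦ hderiv u t)).2
  rwa [integral_neg] at hdom

end OneAddSqRpow

lemma hasDerivAt_Gamma {s : ℝ} (hs : ∀ m : ℕ, s ≠ -m) :
    HasDerivAt Gamma (Gamma s * digamma s) s := by
  rw [digamma, mul_div_cancel₀ _ (Gamma_ne_zero hs)]
  exact (differentiableAt_Gamma hs).hasDerivAt

lemma hasDerivAt_Gamma_sub_div_Gamma {s c : ℝ} (hsc : ∀ m : ℕ, s - c ≠ -m)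
    (hs : ∀ m : ℕ, s ≠ -m) :
    HasDerivAt (fun s ↦ Gamma (s - c) / Gamma s)
      (Gamma (s - c) / Gamma s * (digamma (s - c) - digamma s)) s := by
  refine (((hasDerivAt_Gamma hsc).comp_sub_const s c).fun_div (hasDerivAt_Gamma hs)
    (Gamma_ne_zero hs)).congr_deriv ?_
  field_simp

theorem integral_one_add_sq_rpow_neg_mul_log {s : ℝ} (hs : 1 / 2 < s) :
    ∫ u : ℝ, (1 + u ^ 2) ^ (-s) * log (1 + u ^ 2)
      = √π * Gamma (s - 1 / 2) / Gamma s * (digamma s - digamma (s - 1 / 2)) := by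
  have hpole {t : ℝ} (ht : 0 < t) (m : ℕ) : t ≠ -m := by
    have := m.cast_nonneg (α := ℝ); intro h; linarith
  have heq : (fun t ↦ ∫ u : ℝ, (1 + u ^ 2) ^ (-t))
      =ᶠ[nhds s] fun t ↦ √π * (Gamma (t - 1 / 2) / Gamma t) :=
    eventually_of_mem (Ioi_mem_nhds hs) fun t ht ↦ by
      dsimp only
      rw [integral_one_add_sq_rpow_neg ht, mul_div_assoc]
  have hratio := ((hasDerivAt_Gamma_sub_div_Gamma (c := 1 / 2) (hpole (by linarith))
    (hpole (by linarith))).const_mul √π).congr_of_eventuallyEq heq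
  linear_combination -(hasDerivAt_integral_one_add_sq_rpow_neg hs).unique hratio

theorem integral_sq_add_rpow_neg_mul_log {s a : ℝ} (hs : 1 / 2 < s) (ha : 0 < a) :
    ∫ z : ℝ, (z ^ 2 + a) ^ (-s) * log (z ^ 2 + a)
      = a ^ (1 / 2 - s) * (√π * Gamma (s - 1 / 2) / Gamma s)
          * (digamma s - digamma (s - 1 / 2) + log a) := by
  set f : ℝ → ℝ := fun z ↦ (z ^ 2 + a) ^ (-s) * log (z ^ 2 + a)
  have hscale (u : ℝ) : f (√a * u) = a ^ (-s) * ((1 + u ^ 2) ^ (-s) * log (1 + u ^ 2)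
      + log a * (1 + u ^ 2) ^ (-s)) := by
    have h : (√a * u) ^ 2 + a = a * (1 + u ^ 2) := by rw [mul_pow, sq_sqrt ha.le]; ring
    simp only [f, h, mul_rpow ha.le (by positivity : (0 : ℝ) ≤ 1 + u ^ 2),
      log_mul ha.ne' (by positivity : (1 : ℝ) + u ^ 2 ≠ 0)]
    ring
  have hsub : ∫ z, f z = √a * ∫ u, f (√a * u) := by
    rw [Measure.integral_comp_mul_left, abs_of_pos (by positivity), smul_eq_mul,
      mul_inv_cancel_left₀ (by positivity)]
  have hpow : √a * a ^ (-s) = a ^ (1 / 2 - s) := by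
    rw [sqrt_eq_rpow, ← rpow_add ha]; ring_nf
  simp_rw [hsub, hscale]
  rw [integral_const_mul, integral_add (integrable_one_add_sq_rpow_neg_mul_log hs)
    ((integrable_one_add_sq_rpow_neg hs).const_mul _), integral_const_mul,
    integral_one_add_sq_rpow_neg_mul_log hs, integral_one_add_sq_rpow_neg hs, ← mul_assoc, hpow]
  ring

lemma student_kernel_rpow_eq {b c : ℝ} (hb : 0 < b) (hc : 0 < c) (s z : ℝ) :
    (b ^ 2 * c ^ 2 / (b ^ 2 * z ^ 2 + c ^ 2)) ^ s = (c ^ 2) ^ s * (z ^ 2 + c ^ 2 / b ^ 2) ^ (-s) := by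
  have hpos : 0 < z ^ 2 + c ^ 2 / b ^ 2 := by positivity
  have hkernel : b ^ 2 * c ^ 2 / (b ^ 2 * z ^ 2 + c ^ 2) = c ^ 2 * (z ^ 2 + c ^ 2 / b ^ 2)⁻¹ := by
    field_simp
  rw [hkernel, mul_rpow (sq_nonneg c) (inv_nonneg.mpr hpos.le), inv_rpow hpos.le,
    ← rpow_neg hpos.le]

/-- The logarithmic moment integral of the scaled Student's t kernel. -/
theorem student_kernel_log_integral
    (n : ℕ) (hn : 1 ≤ n) (σx σξ : ℝ) (hσx : 0 < σx) (hσξ : 0 < σξ) :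
    (∫ z : ℝ, (σx ^ 2 * σξ ^ 2 / (σx ^ 2 * z ^ 2 + σξ ^ 2)) ^ (((n : ℝ) + 1) / 2)
        * Real.log (z ^ 2 + σξ ^ 2 / σx ^ 2))
      = (σx ^ n * σξ * Real.sqrt Real.pi * Real.Gamma ((n : ℝ) / 2)
            / Real.Gamma (((n : ℝ) + 1) / 2))
        * (digamma (((n : ℝ) + 1) / 2) - digamma ((n : ℝ) / 2)
            + Real.log (σξ ^ 2 / σx ^ 2)) := by
  set s : ℝ := ((n : ℝ) + 1) / 2 with hs_def
  have hs : 1 / 2 < s := by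
    have : (1 : ℝ) ≤ n := by exact_mod_cast hn
    linarith
  have hconst : (σξ ^ 2) ^ s * (σξ ^ 2 / σx ^ 2) ^ (1 / 2 - s) = σx ^ n * σξ := by
    have hσx2 : (σx ^ 2) ^ ((n : ℝ) / 2) = σx ^ n := by
      rw [← rpow_natCast σx 2, ← rpow_mul hσx.le, Nat.cast_ofNat, mul_div_cancel₀ _ two_ne_zero,
        rpow_natCast]
    rw [div_rpow (by positivity) (by positivity), mul_div_assoc', ← rpow_add (by positivity),
      show s + (1 / 2 - s) = 1 / 2 by ring, ← sqrt_eq_rpow, sqrt_sq hσξ.le,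
      show 1 / 2 - s = -((n : ℝ) / 2) by ring, rpow_neg (by positivity), hσx2,
      div_inv_eq_mul, mul_comm]
  simp_rw [student_kernel_rpow_eq hσx hσξ, mul_assoc]
  rw [integral_const_mul, integral_sq_add_rpow_neg_mul_log hs (by positivity),
    show s - 1 / 2 = (n : ℝ) / 2 by ring, ← mul_assoc, ← mul_assoc, hconst]
  ring
end

section
/- Let X ~ N(0, σ²) with σ > 0 and p ∈ ℕ with p ≥ 1. Then -∫_{-∞}^{∞} f_X(x) log₂(|x| · 2^{1-p} / √2) dx + h(X) = p + (1/2)log₂(2πe) + γ/(2 ln 2), where γ is the Euler–Mascheroni constant and h(X) = (1/2)log₂(2πe σ²). In particular, this quantity is independent of σ. -/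
/-!
By symmetry the integral is twice the one over `(0, ∞)`, where `log₂ (x 2^{1-p} / √2)` is
`log₂ x` plus a constant. Everything thus reduces to the logarithmic moment
`∫₀^∞ log x · e^{-b x²} dx`, which the substitution `t = b x²` turns into the derivative of
the Gamma integral at `1/2`; there `Γ'(1/2) = -√π (γ + 2 log 2)`. The resulting `log₂ σ`
cancels against the one in `h(X)`.
-/

open MeasureTheory Real Set

theorem Real.hasDerivAt_Gamma_of_pos {s : ℝ} (hs : 0 < s) :
    HasDerivAt Gamma (∫ t in Ioi 0, t ^ (s - 1) * (log t * exp (-t))) s := by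
  have hGamma : Complex.Gamma =ᶠ[nhds (s : ℂ)] Complex.GammaIntegral := by
    filter_upwards [Complex.continuous_re.isOpen_preimage _ isOpen_Ioi |>.mem_nhds
      (show (s : ℂ).re ∈ Ioi 0 from hs)] with z hz using Complex.Gamma_eq_integral hz
  have hC := ((Complex.hasDerivAt_GammaIntegral (s := s) hs).congr_of_eventuallyEq
    hGamma).real_of_complex
  simp only [Complex.Gamma_ofReal, Complex.ofReal_re] at hC
  convert hC using 1
  rw [← Complex.ofReal_re (∫ t in Ioi 0, _), ← integral_complex_ofReal]
  congr 1
  refine setIntegral_congr_fun measurableSet_Ioi fun t ht => ?_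
  push_cast [Complex.ofReal_cpow (le_of_lt ht)]
  rfl

theorem Real.integral_Ioi_rpow_neg_half_mul_log_mul_exp_neg :
    ∫ t in Ioi 0, t ^ (-(1 / 2) : ℝ) * (log t * exp (-t))
      = -√π * (eulerMascheroniConstant + 2 * log 2) := by
  have h := hasDerivAt_Gamma_of_pos (s := 1 / 2) (by norm_num)
  norm_num at h
  exact h.unique hasDerivAt_Gamma_one_half

theorem Real.abs_log_le_add_two_mul_rpow_neg_half {x : ℝ} (hx : 0 < x) :
    |log x| ≤ x + 2 * x ^ (-(1 / 2) : ℝ) := by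
  have hlog_inv : -log x ≤ 2 * x ^ (-(1 / 2) : ℝ) := by
    have := log_le_rpow_div (inv_pos.mpr hx).le (by norm_num : (0 : ℝ) < 1 / 2)
    rw [log_inv, inv_rpow hx.le, ← rpow_neg hx.le, div_eq_mul_inv, mul_comm] at this
    convert this using 2
    norm_num
  have hlog : log x ≤ x := log_le_self hx.le
  have hrpow : 0 ≤ x ^ (-(1 / 2) : ℝ) := by positivity
  exact abs_le.mpr ⟨by linarith, by linarith⟩

theorem integrableOn_log_mul_exp_neg_mul_sq {b : ℝ} (hb : 0 < b) :
    IntegrableOn (fun x => log x * exp (-b * x ^ 2)) (Ioi 0) := by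
  refine ((integrableOn_rpow_mul_exp_neg_mul_sq hb (s := 1) (by norm_num)).add
    ((integrableOn_rpow_mul_exp_neg_mul_sq hb (s := -(1 / 2)) (by norm_num)).const_mul 2)).mono'
    (by fun_prop) ?_
  filter_upwards [ae_restrict_mem measurableSet_Ioi] with x (hx : 0 < x)
  rw [Pi.add_apply, norm_mul, norm_of_nonneg (exp_pos _).le, rpow_one, ← mul_assoc, ← add_mul]
  exact mul_le_mul_of_nonneg_right (abs_log_le_add_two_mul_rpow_neg_half hx) (exp_pos _).le

theorem integral_Ioi_log_mul_exp_neg_sq :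
    ∫ x in Ioi 0, log x * exp (-x ^ 2) = -√π * (eulerMascheroniConstant + 2 * log 2) / 4 := by
  rw [← integral_Ioi_rpow_neg_half_mul_log_mul_exp_neg,
    ← integral_comp_rpow_Ioi (fun t => t ^ (-(1 / 2) : ℝ) * (log t * exp (-t))) two_ne_zero,
    ← integral_div]
  refine setIntegral_congr_fun measurableSet_Ioi fun x (hx : 0 < x) => ?_
  have hx_sq : (x ^ (2 : ℝ)) ^ (-(1 / 2) : ℝ) = x⁻¹ := by
    rw [← rpow_mul hx.le]; norm_num [rpow_neg_one]
  rw [hx_sq, rpow_two, log_pow, smul_eq_mul]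
  norm_num
  field_simp
  ring

theorem integral_Ioi_log_mul_exp_neg_mul_sq {b : ℝ} (hb : 0 < b) :
    ∫ x in Ioi 0, log x * exp (-b * x ^ 2)
      = -√(π / b) * (eulerMascheroniConstant + 2 * log 2 + log b) / 4 := by
  have hsb : 0 < √b := sqrt_pos.mpr hb
  have hscale := integral_comp_mul_left_Ioi (fun x => log x * exp (-x ^ 2)) 0 hsb
  rw [mul_zero, integral_Ioi_log_mul_exp_neg_sq] at hscale
  have hsplit : ∀ x ∈ Ioi (0 : ℝ), log (√b * x) * exp (-(√b * x) ^ 2)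
      = log √b * exp (-b * x ^ 2) + log x * exp (-b * x ^ 2) := fun x (hx : 0 < x) => by
    rw [log_mul hsb.ne' hx.ne', mul_pow, sq_sqrt hb.le, neg_mul, add_mul]
  rw [setIntegral_congr_fun measurableSet_Ioi hsplit, integral_add
    ((integrable_exp_neg_mul_sq hb).integrableOn.const_mul _)
    (integrableOn_log_mul_exp_neg_mul_sq hb), integral_const_mul, integral_gaussian_Ioi,
    log_sqrt hb.le, sqrt_div pi_pos.le, smul_eq_mul] at hscale
  rw [sqrt_div pi_pos.le]
  field_simp at hscale ⊢
  linear_combination hscale / 4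

theorem integral_Ioi_log_const_mul_mul_exp_neg_mul_sq {a b : ℝ} (ha : a ≠ 0) (hb : 0 < b) :
    ∫ x in Ioi 0, log (a * x) * exp (-b * x ^ 2)
      = √(π / b) * (2 * log a - log b - eulerMascheroniConstant - 2 * log 2) / 4 := by
  have hsplit : ∀ x ∈ Ioi (0 : ℝ), log (a * x) * exp (-b * x ^ 2)
      = log a * exp (-b * x ^ 2) + log x * exp (-b * x ^ 2) := fun x (hx : 0 < x) => by
    rw [log_mul ha hx.ne', add_mul]
  rw [setIntegral_congr_fun measurableSet_Ioi hsplit, integral_add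
    ((integrable_exp_neg_mul_sq hb).integrableOn.const_mul _)
    (integrableOn_log_mul_exp_neg_mul_sq hb), integral_const_mul, integral_gaussian_Ioi,
    integral_Ioi_log_mul_exp_neg_mul_sq hb]
  ring

theorem smooth_fp_entropy_gaussian_general (σ : ℝ) (hσ : 0 < σ) (p : ℕ) :
    -(∫ x : ℝ, (Real.exp (-(x ^ 2) / (2 * σ ^ 2)) / (σ * Real.sqrt (2 * Real.pi)))
          * Real.logb 2 (|x| * (2 : ℝ) ^ (1 - (p : ℝ)) / Real.sqrt 2))
      + (1 / 2) * Real.logb 2 (2 * Real.pi * Real.exp 1 * σ ^ 2)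
      = (p : ℝ) + (1 / 2) * Real.logb 2 (2 * Real.pi * Real.exp 1)
          + Real.eulerMascheroniConstant / (2 * Real.log 2) := by
  set a : ℝ := 2 ^ (1 - (p : ℝ)) / √2 with ha_def
  set b : ℝ := (2 * σ ^ 2)⁻¹ with hb_def
  have hb : 0 < b := by positivity
  have hintegrand : ∀ x : ℝ, exp (-(x ^ 2) / (2 * σ ^ 2)) / (σ * √(2 * π))
        * logb 2 (|x| * 2 ^ (1 - (p : ℝ)) / √2)
      = (σ * √(2 * π) * log 2)⁻¹ * (log (a * |x|) * exp (-b * |x| ^ 2)) := fun x => by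
    rw [sq_abs, logb, ha_def, hb_def, ← mul_div_assoc, mul_comm _ |x|, neg_div, div_eq_inv_mul]
    field_simp
  have hsqrt : √(π / b) = σ * √(2 * π) := by
    rw [hb_def, div_inv_eq_mul, ← mul_assoc, mul_comm π, sqrt_mul' _ (sq_nonneg σ),
      sqrt_sq hσ.le, mul_comm]
  have hlog_a : log a = (1 - p) * log 2 - log 2 / 2 := by
    rw [log_div (by positivity) (by positivity), log_rpow two_pos, log_sqrt zero_le_two]
  have hlog_b : log b = -(log 2 + 2 * log σ) := by
    rw [log_inv, log_mul two_ne_zero (by positivity), log_pow]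
    push_cast; ring
  simp_rw [hintegrand]
  rw [integral_comp_abs (f := fun y => _ * (log (a * y) * exp (-b * y ^ 2))), integral_const_mul,
    integral_Ioi_log_const_mul_mul_exp_neg_mul_sq (by positivity) hb, hsqrt, hlog_a, hlog_b,
    logb, logb, log_mul (by positivity) (by positivity), log_pow]
  field_simp
  ring

/-- The smooth floating-point entropy approximation of a centered Gaussian:
`H̃⁰_s(p) = h(X) - E[log₂ Δ_s(X)] = p + ½log₂(2πe) + γ/(2 ln 2)`, independent of `σ`. -/
theorem smooth_fp_entropy_gaussian (σ : ℝ) (hσ : 0 < σ) (p : ℕ) (hp : 1 ≤ p) :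
    -(∫ x : ℝ, (Real.exp (-(x ^ 2) / (2 * σ ^ 2)) / (σ * Real.sqrt (2 * Real.pi)))
          * Real.logb 2 (|x| * (2 : ℝ) ^ (1 - (p : ℝ)) / Real.sqrt 2))
      + (1 / 2) * Real.logb 2 (2 * Real.pi * Real.exp 1 * σ ^ 2)
      = (p : ℝ) + (1 / 2) * Real.logb 2 (2 * Real.pi * Real.exp 1)
          + Real.eulerMascheroniConstant / (2 * Real.log 2) :=
  smooth_fp_entropy_gaussian_general σ hσ p
end

section
/- For p ≥ 1 and e ∈ ℤ, the exponent-boundary ratio bounds hold: 2√2(1 - 2^{-p-1})/3 ≤ Δ_s(x)/Δ(x) ≤ 2√2(1 + 2^{-p})/3 for x in the boundary bin [2^{e+1}(1 - 2^{-p-1}), 2^{e+1}(1 + 2^{-p})), where Δ(x) = 3·2^{e-p} is the boundary bin width and Δ_s(x) = (|x|/√2)·2^{1-p}. Moreover both bounds lie in [1/√2, √2] for all p ≥ 1. -/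
open Real

/-! On the boundary bin `Δ = 3·2^(e-p)` is constant while `Δs` is linear in `x`, so `Δs / Δ` is
`2√2/3` times `x / 2^(e+1)`, and the bin says exactly that `x / 2^(e+1)` lies in
`[1 - 2^(-p-1), 1 + 2^(-p))`. The outer bounds then reduce to `2^(-p-1) ≤ 1/4` and
`2^(-p) ≤ 1/2`. -/

lemma smooth_width_div_boundary_width (e p : ℤ) (x : ℝ) :
    (x / √2 * (2 : ℝ) ^ (1 - p)) / (3 * (2 : ℝ) ^ (e - p))
      = 2 * √2 / 3 * (x / (2 : ℝ) ^ (e + 1)) := by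
  rw [show 1 - p = (e - p) + 1 - e by ring, zpow_sub₀ two_ne_zero, zpow_add_one₀ two_ne_zero,
    zpow_add_one₀ two_ne_zero]
  field_simp
  rw [Real.sq_sqrt zero_le_two]

lemma two_zpow_neg_le_half {p : ℕ} (hp : 1 ≤ p) : (2 : ℝ) ^ (-(p : ℤ)) ≤ 1 / 2 := by
  simpa using zpow_le_zpow_right₀ (a := (2 : ℝ)) one_le_two (show -(p : ℤ) ≤ -1 by omega)

lemma two_zpow_neg_sub_one_le_quarter {p : ℕ} (hp : 1 ≤ p) :
    (2 : ℝ) ^ (-(p : ℤ) - 1) ≤ 1 / 4 := by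
  rw [zpow_sub_one₀ two_ne_zero]
  linarith [two_zpow_neg_le_half hp]

lemma inv_sqrt_two_le_two_sqrt_two_mul_one_sub_div_three {t : ℝ} (ht : t ≤ 1 / 4) :
    1 / √2 ≤ 2 * √2 * (1 - t) / 3 := by
  have hsq : √2 * √2 = 2 := Real.mul_self_sqrt zero_le_two
  rw [div_le_div_iff₀ (by positivity) three_pos]
  nlinarith

lemma two_sqrt_two_mul_one_add_div_three_le_sqrt_two {t : ℝ} (ht : t ≤ 1 / 2) :
    2 * √2 * (1 + t) / 3 ≤ √2 := by
  rw [div_le_iff₀ three_pos]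
  nlinarith [Real.sqrt_nonneg 2]

/-- Bounds on the ratio of the smooth bin size to the true bin size on an
exponent-boundary bin, and the fact that both bounds lie in `[1/√2, √2]`. -/
theorem boundary_bin_ratio_bound (e : ℤ) (p : ℕ) (hp : 1 ≤ p) (x : ℝ)
    (hx₁ : (2 : ℝ) ^ (e + 1) * (1 - (2 : ℝ) ^ (-(p : ℤ) - 1)) ≤ x)
    (hx₂ : x < (2 : ℝ) ^ (e + 1) * (1 + (2 : ℝ) ^ (-(p : ℤ))))
    (Δ Δs : ℝ)
    (hΔ : Δ = 3 * (2 : ℝ) ^ (e - (p : ℤ)))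
    (hΔs : Δs = (|x| / Real.sqrt 2) * (2 : ℝ) ^ (1 - (p : ℤ))) :
    (2 * Real.sqrt 2 * (1 - (2 : ℝ) ^ (-(p : ℤ) - 1)) / 3 ≤ Δs / Δ
        ∧ Δs / Δ ≤ 2 * Real.sqrt 2 * (1 + (2 : ℝ) ^ (-(p : ℤ))) / 3)
      ∧ (1 / Real.sqrt 2 ≤ 2 * Real.sqrt 2 * (1 - (2 : ℝ) ^ (-(p : ℤ) - 1)) / 3
        ∧ 2 * Real.sqrt 2 * (1 + (2 : ℝ) ^ (-(p : ℤ))) / 3 ≤ Real.sqrt 2) := by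
  have hquarter := two_zpow_neg_sub_one_le_quarter hp
  have hpow : (0 : ℝ) < 2 ^ (e + 1) := zpow_pos two_pos _
  have hx : 0 < x := (mul_pos hpow (by linarith)).trans_le hx₁
  have hratio : Δs / Δ = 2 * √2 / 3 * (x / 2 ^ (e + 1)) := by
    rw [hΔ, hΔs, abs_of_pos hx, smooth_width_div_boundary_width]
  have hc : (0 : ℝ) ≤ 2 * √2 / 3 := by positivity
  have hlow : 1 - (2 : ℝ) ^ (-(p : ℤ) - 1) ≤ x / 2 ^ (e + 1) := by
    rw [le_div_iff₀ hpow]; linarith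
  have hhigh : x / 2 ^ (e + 1) ≤ 1 + (2 : ℝ) ^ (-(p : ℤ)) := by
    rw [div_le_iff₀ hpow]; linarith
  refine ⟨⟨?_, ?_⟩, inv_sqrt_two_le_two_sqrt_two_mul_one_sub_div_three hquarter,
    two_sqrt_two_mul_one_add_div_three_le_sqrt_two (two_zpow_neg_le_half hp)⟩
  · rw [hratio, mul_div_right_comm (2 * √2)]; exact mul_le_mul_of_nonneg_left hlow hc
  · rw [hratio, mul_div_right_comm (2 * √2)]; exact mul_le_mul_of_nonneg_left hhigh hc
end
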